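/- Let M be a metric space with distance function d. Let U₁, U₂ be open sets in ℂ such that the closed unit disc 𝔻̄ is contained in U₁ ∪ U₂, and assume that f_k : cl(U_k ∩ 𝔻) → M (k = 1, 2) are continuous maps (cl denotes closure in ℂ). Further, assume that for some ε > 0 there is a continuous map g₀ : 𝔻 → M such that d(g₀(ζ), f_k(ζ)) < ε for all ζ ∈ U_k ∩ 𝔻 and k = 1, 2. Then there is R with 0 < R < 1 such that d(g₀(Rζ), f_k(ζ)) < 5ε for all ζ ∈ U_k ∩ 𝔻̄ and k = 1, 2. -/
import Mathlib


open Metric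

lemma aux_near (V : Set ℂ) (hV : IsOpen V) (ζ : ℂ) (hζV : ζ ∈ V)
    (hζ : ζ ∈ closedBall (0 : ℂ) 1) (a : ℝ) (ha : 0 < a) :
    ∃ w ∈ V ∩ ball (0 : ℂ) 1, dist w ζ < a := by
  obtain ⟨t, ht, hball⟩ := Metric.isOpen_iff.1 hV ζ hζV
  set s := min t a with hs
  have hs0 : 0 < s := lt_min ht ha
  set r : ℝ := 1 - min s 1 / 2 with hr
  have hmin0 : 0 < min s 1 := lt_min hs0 one_pos
  have hmin1 : min s 1 ≤ 1 := min_le_right _ _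
  have hr1 : r < 1 := by simp [hr]; linarith
  have hr0 : 0 ≤ r := by simp [hr]; linarith
  have hζnorm : ‖ζ‖ ≤ 1 := by simpa [mem_closedBall, dist_eq_norm] using hζ
  have hdist : dist ((r : ℂ) * ζ) ζ ≤ 1 - r := by
    rw [dist_eq_norm]
    have heq : (r : ℂ) * ζ - ζ = ((r - 1 : ℝ) : ℂ) * ζ := by push_cast; ring
    rw [heq, norm_mul, Complex.norm_real]
    have habs : |r - 1| = 1 - r := by rw [abs_of_nonpos (by linarith)]; ring
    rw [Real.norm_eq_abs, habs]
    nlinarith [norm_nonneg ζ]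
  have hlt : 1 - r < s := by
    rw [hr]
    have h := min_le_left s 1
    linarith
  have hda : dist ((r : ℂ) * ζ) ζ < a :=
    lt_of_le_of_lt hdist (lt_of_lt_of_le hlt (min_le_right _ _))
  have hdt : dist ((r : ℂ) * ζ) ζ < t :=
    lt_of_le_of_lt hdist (lt_of_lt_of_le hlt (min_le_left _ _))
  refine ⟨(r : ℂ) * ζ, ⟨hball (mem_ball.2 hdt), ?_⟩, hda⟩
  rw [mem_ball_zero_iff, norm_mul]
  calc ‖((r:ℝ) : ℂ)‖ * ‖ζ‖ ≤ r * 1 := by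
        apply mul_le_mul _ hζnorm (norm_nonneg _) hr0
        simp [Complex.norm_real, abs_of_nonneg hr0]
    _ < 1 := by linarith

lemma aux_mem_closure (U : Set ℂ) (hU : IsOpen U) (ζ : ℂ) (hζU : ζ ∈ U)
    (hζ : ζ ∈ closedBall (0 : ℂ) 1) : ζ ∈ closure (U ∩ ball (0 : ℂ) 1) := by
  rw [Metric.mem_closure_iff]
  intro δ hδ
  obtain ⟨w, hw, hd⟩ := aux_near U hU ζ hζU hζ δ hδ
  exact ⟨w, hw, by rwa [dist_comm]⟩

lemma key_est {M : Type*} [MetricSpace M] (U V : Set ℂ) (hU : IsOpen U) (hV : IsOpen V)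
    (hcover : closedBall (0 : ℂ) 1 ⊆ U ∪ V) (f g g₀ : ℂ → M) (ε : ℝ) (hε : 0 < ε)
    (hfU : ∀ ζ ∈ U ∩ ball (0 : ℂ) 1, dist (g₀ ζ) (f ζ) < ε)
    (hgV : ∀ ζ ∈ V ∩ ball (0 : ℂ) 1, dist (g₀ ζ) (g ζ) < ε)
    (δU δV ρ : ℝ) (hδU : 0 < δU) (hδV : 0 < δV) (hρ : 0 < ρ)
    (hfmod : ∀ x ∈ closure (U ∩ ball (0 : ℂ) 1), ∀ y ∈ closure (U ∩ ball (0 : ℂ) 1),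
      dist x y < δU → dist (f x) (f y) < ε)
    (hgmod : ∀ x ∈ closure (V ∩ ball (0 : ℂ) 1), ∀ y ∈ closure (V ∩ ball (0 : ℂ) 1),
      dist x y < δV → dist (g x) (g y) < ε)
    (hthick : Metric.thickening ρ (closedBall (0 : ℂ) 1 \ U) ⊆ V)
    (R : ℝ) (hR0 : 0 < R) (hR1 : R < 1)
    (hRδU : 1 - R < δU / 2) (hRδV : 1 - R < δV / 2) (hRρ : 1 - R < ρ) :
    ∀ ζ ∈ U ∩ closedBall (0 : ℂ) 1, dist (g₀ ((R : ℂ) * ζ)) (f ζ) < 5 * ε := by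
  rintro ζ ⟨hζU, hζB⟩
  set z : ℂ := (R : ℂ) * ζ with hz
  have hζnorm : ‖ζ‖ ≤ 1 := by simpa [mem_closedBall, dist_eq_norm] using hζB
  have hznorm : ‖z‖ < 1 := by
    rw [hz, norm_mul, Complex.norm_real, Real.norm_eq_abs, abs_of_pos hR0]
    nlinarith [norm_nonneg ζ]
  have hzball : z ∈ ball (0 : ℂ) 1 := mem_ball_zero_iff.2 hznorm
  have hzclosed : z ∈ closedBall (0 : ℂ) 1 := ball_subset_closedBall hzball
  have hdzζ : dist z ζ ≤ 1 - R := by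
    rw [hz, dist_eq_norm]
    have heq : (R : ℂ) * ζ - ζ = ((R - 1 : ℝ) : ℂ) * ζ := by push_cast; ring
    rw [heq, norm_mul, Complex.norm_real, Real.norm_eq_abs,
      abs_of_nonpos (by linarith : R - 1 ≤ 0)]
    nlinarith [norm_nonneg ζ]
  have hζcl : ζ ∈ closure (U ∩ ball (0 : ℂ) 1) := aux_mem_closure U hU ζ hζU hζB
  by_cases hzU : z ∈ U
  · -- easy case
    have h1 : dist (g₀ z) (f z) < ε := hfU z ⟨hzU, hzball⟩
    have hzcl : z ∈ closure (U ∩ ball (0 : ℂ) 1) := subset_closure ⟨hzU, hzball⟩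
    have h2 : dist (f z) (f ζ) < ε :=
      hfmod z hzcl ζ hζcl (lt_of_le_of_lt hdzζ (by linarith))
    calc dist (g₀ z) (f ζ) ≤ dist (g₀ z) (f z) + dist (f z) (f ζ) := dist_triangle _ _ _
      _ < 5 * ε := by linarith
  · -- hard case: z ∈ V
    have hzV : z ∈ V := (hcover hzclosed).resolve_left hzU
    have hζV : ζ ∈ V := by
      apply hthick
      rw [Metric.mem_thickening_iff]
      refine ⟨z, ⟨hzclosed, hzU⟩, ?_⟩
      rw [dist_comm]
      exact lt_of_le_of_lt hdzζ hRρ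
    obtain ⟨w, ⟨⟨hwU, hwV⟩, hwball⟩, hwζ⟩ :=
      aux_near (U ∩ V) (hU.inter hV) ζ ⟨hζU, hζV⟩ hζB (min (δU / 2) (δV / 2))
        (lt_min (by linarith) (by linarith))
    have hwζU : dist w ζ < δU / 2 := lt_of_lt_of_le hwζ (min_le_left _ _)
    have hwζV : dist w ζ < δV / 2 := lt_of_lt_of_le hwζ (min_le_right _ _)
    have hzclV : z ∈ closure (V ∩ ball (0 : ℂ) 1) := subset_closure ⟨hzV, hzball⟩
    have hwclV : w ∈ closure (V ∩ ball (0 : ℂ) 1) := subset_closure ⟨hwV, hwball⟩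
    have hwclU : w ∈ closure (U ∩ ball (0 : ℂ) 1) := subset_closure ⟨hwU, hwball⟩
    have t1 : dist (g₀ z) (g z) < ε := hgV z ⟨hzV, hzball⟩
    have t2 : dist (g z) (g w) < ε := by
      apply hgmod z hzclV w hwclV
      calc dist z w ≤ dist z ζ + dist ζ w := dist_triangle _ _ _
        _ < δV := by rw [dist_comm ζ w]; linarith
    have t3 : dist (g w) (g₀ w) < ε := by rw [dist_comm]; exact hgV w ⟨hwV, hwball⟩
    have t4 : dist (g₀ w) (f w) < ε := hfU w ⟨hwU, hwball⟩
    have t5 : dist (f w) (f ζ) < ε := hfmod w hwclU ζ hζcl (by linarith)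
    calc dist (g₀ z) (f ζ) ≤ dist (g₀ z) (g z) + dist (g z) (g w) + dist (g w) (g₀ w)
          + dist (g₀ w) (f w) + dist (f w) (f ζ) := by
          have a1 := dist_triangle (g₀ z) (g z) (g w)
          have a2 := dist_triangle (g₀ z) (g w) (g₀ w)
          have a3 := dist_triangle (g₀ z) (g₀ w) (f w)
          have a4 := dist_triangle (g₀ z) (f w) (f ζ)
          linarith
      _ < 5 * ε := by linarith

/-- Lemma 2.1 of the paper. If a continuous map `g₀` on the open unit
disc is `ε`-close to continuous maps `f₁, f₂` on the parts of the disc covered by open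
sets `U₁, U₂` whose union contains the closed disc, then for `R < 1` close enough to `1`,
`ζ ↦ g₀(Rζ)` is `5ε`-close to `f₁, f₂` on the corresponding parts of the closed disc. -/
theorem dilate_approximation {M : Type*} [MetricSpace M]
    (U₁ U₂ : Set ℂ) (hU₁ : IsOpen U₁) (hU₂ : IsOpen U₂)
    (hcover : closedBall (0 : ℂ) 1 ⊆ U₁ ∪ U₂)
    (f₁ f₂ : ℂ → M)
    (hf₁ : ContinuousOn f₁ (closure (U₁ ∩ ball (0 : ℂ) 1)))
    (hf₂ : ContinuousOn f₂ (closure (U₂ ∩ ball (0 : ℂ) 1)))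
    (ε : ℝ) (hε : 0 < ε)
    (g₀ : ℂ → M) (hg₀ : ContinuousOn g₀ (ball (0 : ℂ) 1))
    (h₁ : ∀ ζ ∈ U₁ ∩ ball (0 : ℂ) 1, dist (g₀ ζ) (f₁ ζ) < ε)
    (h₂ : ∀ ζ ∈ U₂ ∩ ball (0 : ℂ) 1, dist (g₀ ζ) (f₂ ζ) < ε) :
    ∃ R : ℝ, 0 < R ∧ R < 1 ∧
      (∀ ζ ∈ U₁ ∩ closedBall (0 : ℂ) 1, dist (g₀ ((R : ℂ) * ζ)) (f₁ ζ) < 5 * ε) ∧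
      (∀ ζ ∈ U₂ ∩ closedBall (0 : ℂ) 1, dist (g₀ ((R : ℂ) * ζ)) (f₂ ζ) < 5 * ε) := by
  -- compactness of the closures
  have hsub : ∀ U : Set ℂ, closure (U ∩ ball (0 : ℂ) 1) ⊆ closedBall (0 : ℂ) 1 := by
    intro U
    calc closure (U ∩ ball (0 : ℂ) 1) ⊆ closure (ball (0 : ℂ) 1) :=
          closure_mono Set.inter_subset_right
      _ ⊆ closedBall (0 : ℂ) 1 := closure_ball_subset_closedBall
  have hcpt₁ : IsCompact (closure (U₁ ∩ ball (0 : ℂ) 1)) :=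
    (isCompact_closedBall (0 : ℂ) 1).of_isClosed_subset isClosed_closure (hsub U₁)
  have hcpt₂ : IsCompact (closure (U₂ ∩ ball (0 : ℂ) 1)) :=
    (isCompact_closedBall (0 : ℂ) 1).of_isClosed_subset isClosed_closure (hsub U₂)
  -- uniform continuity moduli
  obtain ⟨δ₁, hδ₁, hmod₁⟩ := Metric.uniformContinuousOn_iff.1
    (hcpt₁.uniformContinuousOn_of_continuous hf₁) ε hε
  obtain ⟨δ₂, hδ₂, hmod₂⟩ := Metric.uniformContinuousOn_iff.1
    (hcpt₂.uniformContinuousOn_of_continuous hf₂) ε hε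
  -- thickenings
  have hK₁ : IsCompact (closedBall (0 : ℂ) 1 \ U₁) :=
    (isCompact_closedBall (0 : ℂ) 1).of_isClosed_subset
      ((Metric.isClosed_closedBall).sdiff hU₁) Set.diff_subset
  have hK₂ : IsCompact (closedBall (0 : ℂ) 1 \ U₂) :=
    (isCompact_closedBall (0 : ℂ) 1).of_isClosed_subset
      ((Metric.isClosed_closedBall).sdiff hU₂) Set.diff_subset
  obtain ⟨ρ₁, hρ₁, hth₁⟩ := hK₁.exists_thickening_subset_open hU₂
    (fun x hx => (hcover hx.1).resolve_left hx.2)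
  obtain ⟨ρ₂, hρ₂, hth₂⟩ := hK₂.exists_thickening_subset_open hU₁
    (fun x hx => (hcover hx.1).resolve_right hx.2)
  -- choose R
  set η : ℝ := min (min (δ₁ / 2) (δ₂ / 2)) (min ρ₁ ρ₂) with hη
  have hη0 : 0 < η := lt_min (lt_min (by linarith) (by linarith)) (lt_min hρ₁ hρ₂)
  set R : ℝ := 1 - min η 1 / 2 with hR
  have hm0 : 0 < min η 1 := lt_min hη0 one_pos
  have hm1 : min η 1 ≤ 1 := min_le_right _ _
  have hR0 : 0 < R := by rw [hR]; linarith
  have hR1 : R < 1 := by rw [hR]; linarith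
  have hRη : 1 - R < η := by
    rw [hR]
    have := min_le_left η 1
    linarith
  have hRδ₁ : 1 - R < δ₁ / 2 :=
    lt_of_lt_of_le hRη (le_trans (min_le_left _ _) (min_le_left _ _))
  have hRδ₂ : 1 - R < δ₂ / 2 :=
    lt_of_lt_of_le hRη (le_trans (min_le_left _ _) (min_le_right _ _))
  have hRρ₁ : 1 - R < ρ₁ :=
    lt_of_lt_of_le hRη (le_trans (min_le_right _ _) (min_le_left _ _))
  have hRρ₂ : 1 - R < ρ₂ :=
    lt_of_lt_of_le hRη (le_trans (min_le_right _ _) (min_le_right _ _))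
  refine ⟨R, hR0, hR1, ?_, ?_⟩
  · exact key_est U₁ U₂ hU₁ hU₂ hcover f₁ f₂ g₀ ε hε h₁ h₂ δ₁ δ₂ ρ₁ hδ₁ hδ₂ hρ₁
      hmod₁ hmod₂ hth₁ R hR0 hR1 hRδ₁ hRδ₂ hRρ₁
  · exact key_est U₂ U₁ hU₂ hU₁ (by rwa [Set.union_comm] at hcover) f₂ f₁ g₀ ε hε h₂ h₁
      δ₂ δ₁ ρ₂ hδ₂ hδ₁ hρ₂ hmod₂ hmod₁ hth₂ R hR0 hR1 hRδ₂ hRδ₁ hRρ₂
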